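/- Let Y, D, X be random variables with joint distribution P(D,X,Y), where D ranges over M×N real matrices. For any estimator D̂(Y) satisfying the column normalization constraint ‖(D̂(Y))_i‖² = M for each column i, the mean squared error (NM)⁻¹ E[‖D − D̂(Y)‖²_F] is bounded below by 2 − 2 E_Y[ N⁻¹ Σᵢ ‖(E[D|Y])_i‖ / √M ], where (A)_i denotes the i-th column of A and ‖·‖ the Euclidean/Frobenius norm. Equality holds for the estimator (D̂(Y))_i = √M · (E[D|Y])_i / ‖(E[D|Y])_i‖. -/

import Mathlib

/-!
Expanding the squares with the column normalisations, the error is `2 - 2 E[D · D̂(Y)] / (NM)`.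
Since `D̂(Y)` is a function of `Y`, the tower property replaces `D` by the posterior mean
`E[D|Y]` in this pairing, and Cauchy–Schwarz in each column bounds `E[D|Y]_i · D̂(Y)_i` by
`√M ‖E[D|Y]_i‖`, with equality for the rescaled posterior columns.
-/

open Finset

section CondMean

variable {Ω 𝓨 E F : Type*} [Fintype Ω] [DecidableEq 𝓨]
  [AddCommGroup E] [Module ℝ E] [AddCommGroup F] [Module ℝ F]

/-- `E[X | Y = y]` under the weights `p`; it is `0` on a fibre of weight zero, as `0⁻¹ = 0`. -/
noncomputable def condMean (p : Ω → ℝ) (Y : Ω → 𝓨) (X : Ω → E) (y : 𝓨) : E :=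
  (∑ ω, if Y ω = y then p ω else 0)⁻¹ • ∑ ω, if Y ω = y then p ω • X ω else 0

lemma smul_condMean {p : Ω → ℝ} (hp : ∀ ω, 0 ≤ p ω) (Y : Ω → 𝓨) (X : Ω → E) (y : 𝓨) :
    (∑ ω, if Y ω = y then p ω else 0) • condMean p Y X y =
      ∑ ω, if Y ω = y then p ω • X ω else 0 := by
  rw [condMean, smul_smul]
  by_cases hy : ∑ ω, (if Y ω = y then p ω else 0) = 0
  · have hfibre : ∀ ω, Y ω = y → p ω = 0 := fun ω hω => by
      simpa [hω] using (sum_eq_zero_iff_of_nonneg fun ω _ => ite_nonneg (hp ω) le_rfl).1 hy ω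
        (mem_univ ω)
    rw [hy, zero_mul, zero_smul, eq_comm]
    exact sum_eq_zero fun ω _ => by split_ifs with h <;> simp [hfibre ω, h]
  · rw [mul_inv_cancel₀ hy, one_smul]

lemma sum_smul_apply_eq_sum_fibre [Fintype 𝓨] (p : Ω → ℝ) (Y : Ω → 𝓨) (L : 𝓨 → E →ₗ[ℝ] F)
    (Z : Ω → E) :
    ∑ ω, p ω • L (Y ω) (Z ω) = ∑ y, L y (∑ ω, if Y ω = y then p ω • Z ω else 0) := by
  simp_rw [map_sum, apply_ite (L _), map_smul, map_zero]
  rw [sum_comm]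
  simp

lemma sum_smul_apply_condMean [Fintype 𝓨] {p : Ω → ℝ} (hp : ∀ ω, 0 ≤ p ω) (Y : Ω → 𝓨)
    (L : 𝓨 → E →ₗ[ℝ] F) (X : Ω → E) :
    ∑ ω, p ω • L (Y ω) (condMean p Y X (Y ω)) = ∑ ω, p ω • L (Y ω) (X ω) := by
  rw [sum_smul_apply_eq_sum_fibre, sum_smul_apply_eq_sum_fibre]
  refine sum_congr rfl fun y _ => congrArg (L y) ?_
  rw [← smul_condMean hp Y X y, sum_smul]
  exact sum_congr rfl fun ω _ => by split_ifs with h <;> simp [h]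

end CondMean

section Columns

variable {ι : Type*}

lemma sum_sub_sq_of_sum_sq_eq {s : Finset ι} {u v : ι → ℝ} {c : ℝ}
    (hu : ∑ k ∈ s, u k ^ 2 = c) (hv : ∑ k ∈ s, v k ^ 2 = c) :
    ∑ k ∈ s, (u k - v k) ^ 2 = 2 * c - 2 * ∑ k ∈ s, u k * v k := by
  simp only [sub_sq, sum_add_distrib, sum_sub_distrib, hu, hv, mul_assoc, ← mul_sum]
  ring

lemma sum_mul_normalized (s : Finset ι) (u : ι → ℝ) (t : ℝ) :
    ∑ k ∈ s, u k * (t * u k / √(∑ k ∈ s, u k ^ 2)) = √(∑ k ∈ s, u k ^ 2) * t := by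
  set r := √(∑ k ∈ s, u k ^ 2)
  have hr : ∑ k ∈ s, u k ^ 2 = r ^ 2 := (Real.sq_sqrt (sum_nonneg fun k _ => sq_nonneg _)).symm
  calc ∑ k ∈ s, u k * (t * u k / r) = t / r * ∑ k ∈ s, u k ^ 2 := by
        rw [mul_sum]; exact sum_congr rfl fun k _ => by ring
    _ = r * t := by
        rw [hr]
        rcases eq_or_ne r 0 with h | h
        · simp [h]
        · field_simp

end Columns

section Frobenius

variable {m n : Type*} [Fintype m] [Fintype n]

def frobeniusPairing (B : Matrix m n ℝ) : Matrix m n ℝ →ₗ[ℝ] ℝ where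
  toFun A := ∑ i, ∑ μ, A μ i * B μ i
  map_add' A A' := by simp only [Matrix.add_apply, add_mul, sum_add_distrib]
  map_smul' a A := by simp only [Matrix.smul_apply, smul_eq_mul, mul_assoc, ← mul_sum]; rfl

lemma frobeniusPairing_apply (A B : Matrix m n ℝ) :
    frobeniusPairing B A = ∑ i, ∑ μ, A μ i * B μ i := rfl

lemma sum_sq_sub_eq_of_col_sum_sq_eq {A B : Matrix m n ℝ} {c : ℝ}
    (hA : ∀ i, ∑ μ, A μ i ^ 2 = c) (hB : ∀ i, ∑ μ, B μ i ^ 2 = c) :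
    ∑ μ, ∑ i, (A μ i - B μ i) ^ 2 = 2 * (Fintype.card n * c) - 2 * frobeniusPairing B A := by
  rw [sum_comm, frobeniusPairing_apply]
  simp only [fun i => sum_sub_sq_of_sum_sq_eq (hA i) (hB i), sum_sub_distrib, sum_const,
    ← mul_sum, card_univ, nsmul_eq_mul]
  ring

lemma frobeniusPairing_le_of_col_sum_sq_eq {B : Matrix m n ℝ} {c : ℝ}
    (hB : ∀ i, ∑ μ, B μ i ^ 2 = c) (A : Matrix m n ℝ) :
    frobeniusPairing B A ≤ ∑ i, √(∑ μ, A μ i ^ 2) * √c :=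
  sum_le_sum fun i _ => hB i ▸ Real.sum_mul_le_sqrt_mul_sqrt _ _ _

lemma frobeniusPairing_eq_of_col_normalized {A B : Matrix m n ℝ} {t : ℝ}
    (hB : ∀ i μ, B μ i = t * A μ i / √(∑ ν, A ν i ^ 2)) :
    frobeniusPairing B A = ∑ i, √(∑ μ, A μ i ^ 2) * t := by
  simp only [frobeniusPairing_apply, hB, sum_mul_normalized]

end Frobenius

/-- Lower bound on the dictionary MSE for any column-normalized estimator,
with equality for the Bayes-optimal (normalized posterior mean) estimator. -/
theorem dictionary_mse_lower_bound
    {Ω 𝓨 : Type} [Fintype Ω] [Fintype 𝓨] [DecidableEq 𝓨]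
    (M N : ℕ) (hM : 0 < M) (hN : 0 < N)
    (p : Ω → ℝ) (hp : ∀ ω, 0 ≤ p ω) (hp1 : ∑ ω, p ω = 1)
    (D : Ω → Matrix (Fin M) (Fin N) ℝ) (Y : Ω → 𝓨)
    (hD : ∀ ω, p ω ≠ 0 → ∀ i, ∑ μ, (D ω μ i) ^ 2 = M)
    (Dhat : 𝓨 → Matrix (Fin M) (Fin N) ℝ)
    (hDhat : ∀ y i, ∑ μ, (Dhat y μ i) ^ 2 = M)
    (post : 𝓨 → Matrix (Fin M) (Fin N) ℝ)
    (hpost : ∀ y, post y =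
      (∑ ω, if Y ω = y then p ω else 0)⁻¹ • ∑ ω, if Y ω = y then p ω • D ω else 0) :
    (1 / (N * M) : ℝ) * ∑ ω, p ω * (∑ μ, ∑ i, (D ω μ i - Dhat (Y ω) μ i) ^ 2)
      ≥ 2 - 2 * ∑ ω, p ω *
          ((1 / N : ℝ) * ∑ i, Real.sqrt (∑ μ, (post (Y ω) μ i) ^ 2) / Real.sqrt M)
    ∧ ((∀ ω, p ω ≠ 0 → ∀ i μ,
          Dhat (Y ω) μ i =
            Real.sqrt M * post (Y ω) μ i / Real.sqrt (∑ ν, (post (Y ω) ν i) ^ 2)) →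
        (1 / (N * M) : ℝ) * ∑ ω, p ω * (∑ μ, ∑ i, (D ω μ i - Dhat (Y ω) μ i) ^ 2)
          = 2 - 2 * ∑ ω, p ω *
              ((1 / N : ℝ) * ∑ i, Real.sqrt (∑ μ, (post (Y ω) μ i) ^ 2) / Real.sqrt M)) := by
  have hK : (0 : ℝ) < N * M := by positivity
  have htower : ∑ ω, p ω * frobeniusPairing (Dhat (Y ω)) (D ω) =
      ∑ ω, p ω * frobeniusPairing (Dhat (Y ω)) (post (Y ω)) := by
    rw [funext hpost]
    exact (sum_smul_apply_condMean hp Y (fun y => frobeniusPairing (Dhat y)) D).symm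
  have hmse : ∑ ω, p ω * (∑ μ, ∑ i, (D ω μ i - Dhat (Y ω) μ i) ^ 2) =
      2 * (N * M) - 2 * ∑ ω, p ω * frobeniusPairing (Dhat (Y ω)) (post (Y ω)) := by
    calc _ = ∑ ω, (p ω * (2 * (N * M)) - 2 * (p ω * frobeniusPairing (Dhat (Y ω)) (D ω))) := by
          refine sum_congr rfl fun ω _ => ?_
          rcases eq_or_ne (p ω) 0 with h | h
          · simp [h]
          · rw [sum_sq_sub_eq_of_col_sum_sq_eq (hD ω h) (hDhat (Y ω)), Fintype.card_fin]
            ring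
      _ = _ := by rw [sum_sub_distrib, ← sum_mul, hp1, ← mul_sum, htower, one_mul]
  have hscale (x : Fin N → ℝ) : ∑ i, x i * √M = (N * M) * ((1 / N : ℝ) * ∑ i, x i / √M) := by
    rw [← sum_div, ← sum_mul]
    field_simp
    rw [Real.sq_sqrt M.cast_nonneg]
  have hnormalize (P : ℝ) : 1 / (N * M : ℝ) * (2 * (N * M) - 2 * P) = 2 - 2 * (P / (N * M)) := by
    field_simp
  rw [hmse, hnormalize]
  refine ⟨?_, fun hopt => ?_⟩
  · rw [ge_iff_le, sub_le_sub_iff_left, mul_le_mul_iff_right₀ two_pos, div_le_iff₀' hK, mul_sum]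
    refine sum_le_sum fun ω _ => ?_
    rw [mul_left_comm]
    exact mul_le_mul_of_nonneg_left
      ((frobeniusPairing_le_of_col_sum_sq_eq (hDhat _) _).trans_eq (hscale _)) (hp ω)
  · congr 2
    rw [div_eq_iff hK.ne', sum_mul]
    refine sum_congr rfl fun ω _ => ?_
    rcases eq_or_ne (p ω) 0 with h | h
    · simp [h]
    · rw [frobeniusPairing_eq_of_col_normalized (hopt ω h), hscale]
      ring
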